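/- Let S = {x_1 < x_2 < ... < x_M} ⊆ [n] and consider the RMJ-based ranking model with identity central ranking and dispersion q ∈ (0,1). For a top-k list π_k = π_{k-1} ⊕ z with z ∉ S and R(π_{k-1}) ∩ S = ∅, the conditional probability of choosing x_i from S given that the participant's top-k list is π_k equals q^{M - p(z|S) + i - 1}/(1+q+...+q^{M-1}) if z > x_i, and q^{i - p(z|S) - 1}/(1+q+...+q^{M-1}) if z < x_i, where p(z|S) = |{x ∈ S : x < z}|. -/

import Mathlib

/-!
Fixing the prefix `f` of `π` leaves `π = f ++ l` with `l` an ordering of the complement `T` of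
the entries of `f`, and `d_R (f ++ l) = C + d_R (z :: l)` with `z` the last entry of `f` and `C`
independent of `l`. Both sums therefore become sums of `q ^ d_R (z :: l)` over orderings `l` of
`T`. Splitting off the first entry `a` of `l` contributes the factor `q ^ (|T| * [a < z])` and
restarts the sum on `T \ {a}` from `a`. By induction, the full sum is `q ^ rank_T z * ψ(|T|)`, and
the part of it where `x` is the first element of `S` met by `l` is
`q ^ (rank_T z + p) * ψ(|T|) / (1 + q + ... + q ^ (|S| - 1))`, where `p` is the position of `x`
in `S` read cyclically from just above `z`; the induction step is a rearrangement of geometric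
sums.
-/

open Finset

/-- ψ(n,q) = ∏_{i=1}^{n} (1 + q + ... + q^{i-1}). -/
def psi (n : ℕ) (q : ℝ) : ℝ := ∏ i ∈ Finset.range n, ∑ j ∈ Finset.range (i + 1), q ^ j

/-- Reverse major index of a full permutation. -/
def dR {n : ℕ} (π : Equiv.Perm (Fin n)) : ℕ :=
  ∑ i : Fin (n - 1),
    if π ⟨i.val + 1, by have := i.isLt; omega⟩ < π ⟨i.val, by have := i.isLt; omega⟩ then
      n - (i.val + 1) else 0

section GeomSum

variable {R : Type*} [CommSemiring R]

theorem geom_sum_add (q : R) (a b : ℕ) :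
    ∑ j ∈ range (a + b), q ^ j =
      ∑ j ∈ range a, q ^ j + q ^ a * ∑ j ∈ range b, q ^ j := by
  simp only [sum_range_add, mul_sum, pow_add]

theorem sum_range_pow_eq_pow_mul_geom_sum (q : R) {b c : ℕ} {e : ℕ → ℕ}
    (he : ∀ j < b, e j = c + j) :
    ∑ j ∈ range b, q ^ e j = q ^ c * ∑ j ∈ range b, q ^ j := by
  rw [mul_sum]
  exact sum_congr rfl fun j hj => by rw [he j (mem_range.1 hj), pow_add]

theorem sum_range_pow_rotate (q : R) {r m : ℕ} (hr : r ≤ m) :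
    ∑ j ∈ range m, q ^ ((if j < r then m else 0) + j) = q ^ r * ∑ j ∈ range m, q ^ j := by
  obtain ⟨c, rfl⟩ := Nat.exists_eq_add_of_le hr
  rw [sum_range_add,
    sum_range_pow_eq_pow_mul_geom_sum q (b := r) (c := r + c) (fun j hj => by rw [if_pos hj]),
    sum_range_pow_eq_pow_mul_geom_sum q (b := c) (c := r) (fun j hj => by split_ifs <;> omega),
    add_comm r c, geom_sum_add]
  ring

theorem sum_range_pow_rotate_of_le (q : R) {u v K M : ℕ} (hvu : v ≤ u) (huK : u ≤ K) :
    ∑ j ∈ range K, q ^ ((if j < u then M + K else 0) + (if v ≤ j then M else 0) + j) +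
        q ^ (M + K + v) * ∑ j ∈ range M, q ^ j =
      q ^ (u + M) * ∑ j ∈ range (M + K), q ^ j := by
  obtain ⟨b, rfl⟩ := Nat.exists_eq_add_of_le hvu
  obtain ⟨c, rfl⟩ := Nat.exists_eq_add_of_le huK
  rw [sum_range_add, sum_range_add,
    sum_range_pow_eq_pow_mul_geom_sum q (b := v) (c := M + (v + b + c))
      (fun j hj => by split_ifs <;> omega),
    sum_range_pow_eq_pow_mul_geom_sum q (b := b) (c := M + (v + b + c) + M + v)
      (fun j hj => by split_ifs <;> omega),
    sum_range_pow_eq_pow_mul_geom_sum q (b := c) (c := M + v + b)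
      (fun j hj => by split_ifs <;> omega),
    show M + (v + b + c) = c + (v + (M + b)) by omega, geom_sum_add, geom_sum_add, geom_sum_add]
  ring

theorem sum_range_pow_rotate_of_ge (q : R) {u v K M : ℕ} (huv : u ≤ v) (hvK : v ≤ K) :
    ∑ j ∈ range K, q ^ ((if j < u then M + K else 0) + (if v ≤ j then M else 0) + j) +
        q ^ v * ∑ j ∈ range M, q ^ j =
      q ^ u * ∑ j ∈ range (M + K), q ^ j := by
  obtain ⟨b, rfl⟩ := Nat.exists_eq_add_of_le huv
  obtain ⟨c, rfl⟩ := Nat.exists_eq_add_of_le hvK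
  rw [sum_range_add, sum_range_add,
    sum_range_pow_eq_pow_mul_geom_sum q (b := u) (c := M + (u + b + c))
      (fun j hj => by split_ifs <;> omega),
    sum_range_pow_eq_pow_mul_geom_sum q (b := b) (c := u) (fun j hj => by split_ifs <;> omega),
    sum_range_pow_eq_pow_mul_geom_sum q (b := c) (c := M + u + b)
      (fun j hj => by split_ifs <;> omega),
    show M + (u + b + c) = b + (M + (c + u)) by omega, geom_sum_add, geom_sum_add, geom_sum_add]
  ring

end GeomSum

theorem psi_pos (m : ℕ) {q : ℝ} (hq : 0 < q) : 0 < psi m q :=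
  prod_pos fun _ _ => geom_sum_pos hq.le (Nat.succ_ne_zero _)

theorem psi_succ (m : ℕ) (q : ℝ) : psi (m + 1) q = psi m q * ∑ j ∈ range (m + 1), q ^ j :=
  prod_range_succ _ _

namespace Finset

variable {α : Type*} [LinearOrder α]

def rank (A : Finset α) (t : α) : ℕ := #{a ∈ A | a < t}

theorem rank_le_card (A : Finset α) (t : α) : rank A t ≤ #A := card_filter_le _ _

theorem rank_mono (A : Finset α) {s t : α} (h : s ≤ t) : rank A s ≤ rank A t :=
  card_le_card fun _ ha => by
    simp only [mem_filter] at ha ⊢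
    exact ⟨ha.1, ha.2.trans_le h⟩

theorem rank_lt_rank (A : Finset α) {a t : α} (ha : a ∈ A) (h : a < t) : rank A a < rank A t :=
  card_lt_card ⟨fun _ hb => by
      simp only [mem_filter] at hb ⊢
      exact ⟨hb.1, hb.2.trans h⟩,
    fun hsub => lt_irrefl a (mem_filter.1 (hsub (mem_filter.2 ⟨ha, h⟩))).2⟩

theorem lt_iff_rank_lt (A : Finset α) {a t : α} (ha : a ∈ A) : a < t ↔ rank A a < rank A t :=
  ⟨rank_lt_rank A ha, fun h => lt_of_not_ge fun hta => (rank_mono A hta).not_gt h⟩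

theorem lt_iff_rank_le (A : Finset α) {a t : α} (ha : a ∈ A) (ht : t ∉ A) :
    t < a ↔ rank A t ≤ rank A a := by
  refine ⟨fun h => rank_mono A h.le, fun h => lt_of_le_of_ne ?_ fun hta => ht (hta ▸ ha)⟩
  exact le_of_not_gt fun hat => (rank_lt_rank A ha hat).not_ge h

theorem rank_erase_self [DecidableEq α] (A : Finset α) (a : α) :
    rank (A.erase a) a = rank A a := by
  rw [rank, filter_erase, erase_eq_of_notMem (by simp), rank]

theorem rank_eq_rank_add_rank_sdiff [DecidableEq α] {S T : Finset α} (h : S ⊆ T) (t : α) :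
    rank T t = rank S t + rank (T \ S) t := by
  rw [rank, rank, rank, ← card_union_of_disjoint (disjoint_filter_filter disjoint_sdiff),
    ← filter_union, union_sdiff_of_subset h]

theorem sum_rank_eq_sum_range {M : Type*} [AddCommMonoid M] (A : Finset α) (g : ℕ → M) :
    ∑ a ∈ A, g (rank A a) = ∑ j ∈ range #A, g j := by
  have hinj : Set.InjOn (rank A) A :=
    StrictMonoOn.injOn fun a ha _ _ h => rank_lt_rank A ha h
  have himage : A.image (rank A) = range #A := by
    refine eq_of_subset_of_card_le (fun j hj => ?_) (by rw [card_image_of_injOn hinj, card_range])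
    obtain ⟨a, ha, rfl⟩ := mem_image.1 hj
    exact mem_range.2 (card_lt_card
      ⟨filter_subset _ _, fun hsub => lt_irrefl a (mem_filter.1 (hsub ha)).2⟩)
  rw [← himage, sum_image hinj]

/-- The position of `x` in `S` listed cyclically from just above `z`; for `S = {x_1 < ... < x_M}`
this is the paper's exponent `M - p(z|S) + i - 1` (if `x_i < z`) or `i - 1 - p(z|S)`. -/
def cyclicRank (S : Finset α) (z x : α) : ℕ :=
  if x < z then #S - rank S z + rank S x else rank S x - rank S z

theorem cyclicRank_add_rank (S : Finset α) (a x : α) :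
    cyclicRank S a x + rank S a = rank S x + if x < a then #S else 0 := by
  have := rank_le_card S a
  unfold cyclicRank
  split_ifs with h
  · omega
  · have := rank_mono S (not_lt.1 h)
    omega

end Finset

section Orderings

variable {α : Type*}

def orderings (A : Finset α) : Finset (List α) := ⟨A.val.lists, Multiset.lists_nodup_finset A⟩

theorem mem_orderings {A : Finset α} {l : List α} : l ∈ orderings A ↔ A.val = l :=
  Multiset.mem_lists_iff _ _

theorem length_of_mem_orderings {A : Finset α} {l : List α} (hl : l ∈ orderings A) :
    l.length = #A := by
  rw [card_def, mem_orderings.1 hl, Multiset.coe_card]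

theorem nodup_of_mem_orderings {A : Finset α} {l : List α} (hl : l ∈ orderings A) :
    l.Nodup := by
  rw [← Multiset.coe_nodup, ← mem_orderings.1 hl]
  exact A.nodup

theorem mem_of_mem_orderings {A : Finset α} {l : List α} (hl : l ∈ orderings A) {a : α} :
    a ∈ l ↔ a ∈ A := by
  rw [← Multiset.mem_coe, ← mem_orderings.1 hl, mem_val]

theorem orderings_empty : orderings (∅ : Finset α) = {[]} := by
  ext l
  simp [mem_orderings, eq_comm]

variable [DecidableEq α]

theorem append_mem_orderings_iff {A : Finset α} {p l : List α} (hp : p.Nodup)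
    (hpA : ∀ a ∈ p, a ∈ A) : p ++ l ∈ orderings A ↔ l ∈ orderings (A \ p.toFinset) := by
  have hle : (p : Multiset α) ≤ A.val :=
    (Multiset.le_iff_subset (Multiset.coe_nodup.2 hp)).2 fun a ha => mem_val.mpr (hpA a ha)
  rw [mem_orderings, mem_orderings, sdiff_val, List.toFinset_val, List.dedup_eq_self.2 hp,
    ← Multiset.coe_add, tsub_eq_iff_eq_add_of_le hle, add_comm]

theorem cons_mem_orderings_iff {A : Finset α} {a : α} {l : List α} (ha : a ∈ A) :
    a :: l ∈ orderings A ↔ l ∈ orderings (A.erase a) := by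
  simpa [← sdiff_singleton_eq_erase] using
    append_mem_orderings_iff (A := A) (p := [a]) (l := l) (List.nodup_singleton a) (by simpa)

theorem sum_orderings_eq_sum_sum_cons {M : Type*} [AddCommMonoid M] {A : Finset α}
    (hA : A.Nonempty) (F : List α → M) :
    ∑ l ∈ orderings A, F l = ∑ a ∈ A, ∑ l ∈ orderings (A.erase a), F (a :: l) := by
  rw [sum_sigma']
  refine (sum_bij (fun x _ => x.1 :: x.2) (fun x hx => ?_) (fun x _ y _ h => ?_)
    (fun l hl => ?_) fun _ _ => rfl).symm
  · obtain ⟨ha, hl⟩ := mem_sigma.1 hx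
    exact (cons_mem_orderings_iff ha).2 hl
  · simp only [List.cons.injEq] at h
    exact Sigma.ext h.1 (heq_of_eq h.2)
  · cases l with
    | nil => exact absurd (length_of_mem_orderings hl) hA.card_pos.ne
    | cons a l =>
      have ha : a ∈ A := (mem_of_mem_orderings hl).1 List.mem_cons_self
      exact ⟨⟨a, l⟩, mem_sigma.2 ⟨ha, (cons_mem_orderings_iff ha).1 hl⟩, rfl⟩

theorem sum_orderings_prefix {M : Type*} [AddCommMonoid M] {A : Finset α}
    {p : List α} (hp : p.Nodup) (hpA : ∀ a ∈ p, a ∈ A) (G : List α → M) :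
    ∑ L ∈ orderings A, (if p <+: L then G L else 0) =
      ∑ l ∈ orderings (A \ p.toFinset), G (p ++ l) := by
  rw [← sum_filter]
  refine (sum_bij (fun l _ => p ++ l) (fun l hl => ?_) (fun _ _ _ _ h => List.append_cancel_left h)
    (fun L hL => ?_) fun _ _ => rfl).symm
  · exact mem_filter.2 ⟨(append_mem_orderings_iff hp hpA).2 hl, List.prefix_append p l⟩
  · obtain ⟨hL, l, rfl⟩ := mem_filter.1 hL
    exact ⟨l, (append_mem_orderings_iff hp hpA).1 hL, rfl⟩

end Orderings

section ReverseMajorIndex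

variable {α : Type*} [LinearOrder α]

def revMaj : List α → ℕ
  | a :: b :: l => (if b < a then l.length + 1 else 0) + revMaj (b :: l)
  | _ => 0

def descents : List α → ℕ
  | a :: b :: l => (if b < a then 1 else 0) + descents (b :: l)
  | _ => 0

@[simp]
theorem revMaj_cons_cons (a b : α) (l : List α) :
    revMaj (a :: b :: l) = (if b < a then l.length + 1 else 0) + revMaj (b :: l) := rfl

theorem revMaj_append_cons (p l : List α) (z : α) :
    revMaj (p ++ z :: l) =
      revMaj (p ++ [z]) + l.length * descents (p ++ [z]) + revMaj (z :: l) := by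
  induction p with
  | nil => simp [revMaj, descents]
  | cons a p ih =>
    cases p with
    | nil => simp [revMaj, descents]; split_ifs <;> ring
    | cons b p =>
      simp only [List.cons_append, revMaj_cons_cons, descents] at ih ⊢
      rw [ih]
      simp only [List.length_append, List.length_cons, List.length_nil]
      split_ifs <;> ring

theorem revMaj_ofFn : ∀ {n : ℕ} (g : Fin n → α), revMaj (List.ofFn g) =
    ∑ i : Fin (n - 1),
      if g ⟨i.val + 1, by omega⟩ < g ⟨i.val, by omega⟩ then n - (i.val + 1) else 0
  | 0, g => by simp [revMaj]
  | 1, g => by simp [revMaj]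
  | n + 2, g => by
    rw [List.ofFn_succ, List.ofFn_succ, revMaj_cons_cons,
      ← List.ofFn_succ (f := fun i => g i.succ), revMaj_ofFn, List.length_ofFn]
    change _ = ∑ i : Fin (n + 1), _
    rw [Fin.sum_univ_succ]
    congr 1
    refine sum_congr rfl fun i _ => ?_
    simp only [Fin.succ_mk, Fin.val_succ]
    split_ifs <;> omega

theorem revMaj_append {p : List α} (hp : p ≠ []) (l : List α) :
    revMaj (p ++ l) = revMaj p + l.length * descents p + revMaj (p.getLast hp :: l) := by
  obtain ⟨p, z, rfl⟩ : ∃ p' z, p = p' ++ [z] :=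
    ⟨p.dropLast, p.getLast hp, (List.dropLast_append_getLast hp).symm⟩
  rw [List.getLast_append_singleton, List.append_assoc, List.singleton_append, revMaj_append_cons]

theorem dR_eq_revMaj {n : ℕ} (π : Equiv.Perm (Fin n)) : dR π = revMaj (List.ofFn π) :=
  (revMaj_ofFn π).symm

end ReverseMajorIndex

section FirstChoice

variable {α : Type*} [LinearOrder α]

theorem sum_pow_ite_lt_add_rank {R : Type*} [CommSemiring R] (q : R) (T : Finset α) (z : α) :
    ∑ a ∈ T, q ^ ((if a < z then #T else 0) + T.rank a) =
      q ^ T.rank z * ∑ j ∈ range #T, q ^ j := by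
  rw [← sum_range_pow_rotate q (T.rank_le_card z), ← sum_rank_eq_sum_range T]
  exact sum_congr rfl fun a ha => by simp only [← T.lt_iff_rank_lt ha]

-- The induction step of `sum_orderings_find?_pow_revMaj_mul`: the first entry `a` of the
-- ordering is either `x` (second term) or lies outside `S` (first term).
theorem sum_sdiff_pow_add_pow_mul_geom_sum {R : Type*} [CommRing R] (q : R) {S T : Finset α}
    {x z : α} (hST : S ⊆ T) (hx : x ∈ S) (hz : z ∉ T) :
    ∑ a ∈ T \ S, q ^ ((if a < z then #T else 0) + T.rank a + S.cyclicRank a x) +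
        q ^ ((if x < z then #T else 0) + T.rank x) * ∑ j ∈ range #S, q ^ j =
      q ^ (T.rank z + S.cyclicRank z x) * ∑ j ∈ range #T, q ^ j := by
  set U := T \ S
  have hxU : x ∉ U := fun h => (mem_sdiff.1 h).2 hx
  have hT : #T = #S + #U := by rw [card_sdiff_of_subset hST]; have := card_le_card hST; omega
  have hrank : ∀ t, T.rank t = S.rank t + U.rank t := rank_eq_rank_add_rank_sdiff hST
  have hsum : ∑ a ∈ U, q ^ ((if a < z then #T else 0) + T.rank a + S.cyclicRank a x) =
      q ^ S.rank x * ∑ j ∈ range #U, q ^ ((if j < U.rank z then #S + #U else 0) +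
        (if U.rank x ≤ j then #S else 0) + j) := by
    rw [mul_sum, ← sum_rank_eq_sum_range U]
    refine sum_congr rfl fun a ha => ?_
    have := S.cyclicRank_add_rank a x
    simp only [← pow_add, ← U.lt_iff_rank_lt ha, ← U.lt_iff_rank_le ha hxU]
    rw [hrank, hT]
    congr 1
    split_ifs at this ⊢ <;> omega
  have hz_exp := S.cyclicRank_add_rank z x
  rw [hsum, hrank x, hrank z, hT]
  by_cases hxz : x < z
  · have key := sum_range_pow_rotate_of_le q (M := #S) (U.rank_mono hxz.le) (U.rank_le_card z)
    rw [if_pos hxz] at hz_exp ⊢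
    rw [show S.rank z + U.rank z + S.cyclicRank z x = S.rank x + (U.rank z + #S) by omega]
    linear_combination q ^ S.rank x * key
  · have hzx : z < x := lt_of_le_of_ne (not_lt.1 hxz) fun h => hz (h ▸ hST hx)
    have key := sum_range_pow_rotate_of_ge q (M := #S) (U.rank_mono hzx.le) (U.rank_le_card x)
    rw [if_neg hxz] at hz_exp ⊢
    rw [show S.rank z + U.rank z + S.cyclicRank z x = S.rank x + U.rank z by omega]
    linear_combination q ^ S.rank x * key

theorem sum_orderings_pow_revMaj (q : ℝ) (T : Finset α) (z : α) :
    ∑ l ∈ orderings T, q ^ revMaj (z :: l) = q ^ T.rank z * psi #T q := by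
  induction T using Finset.strongInduction generalizing z with
  | H T ih =>
  rcases T.eq_empty_or_nonempty with rfl | hT
  · simp [orderings_empty, revMaj, rank, psi]
  obtain ⟨m, hm⟩ := Nat.exists_eq_add_one_of_ne_zero hT.card_pos.ne'
  have hfirst : ∀ a ∈ T, ∑ l ∈ orderings (T.erase a), q ^ revMaj (z :: a :: l) =
      q ^ ((if a < z then #T else 0) + T.rank a) * psi m q := by
    intro a ha
    have hcard : #(T.erase a) = m := by rw [card_erase_of_mem ha, hm, Nat.add_sub_cancel]
    rw [sum_congr rfl fun l hl => by
        rw [revMaj_cons_cons, length_of_mem_orderings hl, hcard, pow_add], ← mul_sum,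
      ih _ (erase_ssubset ha), rank_erase_self, hcard, pow_add, hm, mul_assoc]
  rw [sum_orderings_eq_sum_sum_cons hT, sum_congr rfl hfirst, ← sum_mul, sum_pow_ite_lt_add_rank,
    hm, psi_succ]
  ring

theorem sum_orderings_find?_pow_revMaj_mul (q : ℝ) {S T : Finset α} {x z : α} (hST : S ⊆ T)
    (hx : x ∈ S) (hz : z ∉ T) :
    (∑ l ∈ orderings T, if l.find? (· ∈ S) = some x then q ^ revMaj (z :: l) else 0) *
        ∑ j ∈ range #S, q ^ j =
      q ^ (T.rank z + S.cyclicRank z x) * psi #T q := by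
  induction T using Finset.strongInduction generalizing z with
  | H T ih =>
  obtain ⟨m, hm⟩ := Nat.exists_eq_add_one_of_ne_zero (card_pos.2 ⟨x, hST hx⟩).ne'
  have hcard : ∀ a ∈ T, #(T.erase a) = m := fun a ha => by
    rw [card_erase_of_mem ha, hm, Nat.add_sub_cancel]
  have hpsi : psi #T q = psi m q * ∑ j ∈ range #T, q ^ j := by rw [hm, psi_succ]
  have hhead : ∀ a ∈ T, ∀ l ∈ orderings (T.erase a),
      q ^ revMaj (z :: a :: l) = q ^ (if a < z then #T else 0) * q ^ revMaj (a :: l) :=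
    fun a ha l hl => by rw [revMaj_cons_cons, length_of_mem_orderings hl, hcard a ha, hm, pow_add]
  have hfirst_x : ∑ l ∈ orderings (T.erase x),
      (if (x :: l).find? (· ∈ S) = some x then q ^ revMaj (z :: x :: l) else 0) =
        q ^ ((if x < z then #T else 0) + T.rank x) * psi m q := by
    rw [sum_congr rfl fun l hl => by
        rw [List.find?_cons_of_pos (by simpa using hx), if_pos rfl, hhead x (hST hx) l hl],
      ← mul_sum, sum_orderings_pow_revMaj, rank_erase_self, hcard x (hST hx), pow_add, mul_assoc]
  have hfirst_S : ∀ a ∈ S, a ≠ x → ∑ l ∈ orderings (T.erase a),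
      (if (a :: l).find? (· ∈ S) = some x then q ^ revMaj (z :: a :: l) else 0) = 0 :=
    fun a ha hax => sum_eq_zero fun l _ => by
      rw [List.find?_cons_of_pos (by simpa using ha), if_neg (by simpa using hax)]
  have hfirst_U : ∀ a ∈ T \ S, (∑ l ∈ orderings (T.erase a),
      (if (a :: l).find? (· ∈ S) = some x then q ^ revMaj (z :: a :: l) else 0)) *
        ∑ j ∈ range #S, q ^ j =
        q ^ ((if a < z then #T else 0) + T.rank a + S.cyclicRank a x) * psi m q := by
    intro a ha
    obtain ⟨haT, haS⟩ := mem_sdiff.1 ha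
    rw [sum_congr rfl fun l hl => by
        rw [List.find?_cons_of_neg (by simpa using haS), hhead a haT l hl, ← mul_ite_zero],
      ← mul_sum, mul_assoc, ih _ (erase_ssubset haT) (subset_erase.2 ⟨hST, haS⟩)
        (notMem_erase a T), rank_erase_self, hcard a haT, pow_add, pow_add, pow_add]
    ring
  rw [sum_orderings_eq_sum_sum_cons ⟨x, hST hx⟩, ← sum_sdiff hST,
    sum_eq_single_of_mem x hx hfirst_S, add_mul, sum_mul, sum_congr rfl hfirst_U, hfirst_x,
    ← sum_mul, hpsi]
  linear_combination psi m q * sum_sdiff_pow_add_pow_mul_geom_sum q hST hx hz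

end FirstChoice

theorem List.find?_append_of_forall_not {α : Type*} {P : α → Bool} {p : List α}
    (h : ∀ a ∈ p, P a = false) (l : List α) : (p ++ l).find? P = l.find? P := by
  rw [List.find?_append, List.find?_eq_none.2 fun a ha => by simp [h a ha], Option.none_or]

section Permutations

variable {n k : ℕ}

theorem sum_perm_eq_sum_orderings {M : Type*} [AddCommMonoid M] (G : List (Fin n) → M) :
    ∑ π : Equiv.Perm (Fin n), G (List.ofFn π) = ∑ L ∈ orderings univ, G L := by
  refine sum_nbij (fun π => List.ofFn π) (fun π _ => ?_)
    (fun π _ σ _ h => Equiv.ext (congrFun (List.ofFn_injective h))) (fun L hL => ?_)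
    fun _ _ => rfl
  · refine mem_orderings.2 ((Multiset.Nodup.ext univ.nodup ?_).2 fun a => ?_)
    · exact Multiset.coe_nodup.2 (List.nodup_ofFn.2 π.injective)
    · simpa [List.mem_ofFn] using π.surjective a
  · have hlen : L.length = n := by rw [length_of_mem_orderings hL, card_univ, Fintype.card_fin]
    let g : Fin n → Fin n := fun i => L[i.val]'(by omega)
    have hinj : Function.Injective g := fun i j h =>
      Fin.ext ((nodup_of_mem_orderings hL).getElem_inj_iff.1 h)
    refine ⟨Equiv.ofBijective g (Finite.injective_iff_bijective.1 hinj), mem_coe.2 (mem_univ _),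
      ?_⟩
    exact List.ext_getElem (by simp [hlen]) fun i _ _ => by simp [g]

theorem List.ofFn_prefix_ofFn_iff {α : Type*} (hkn : k ≤ n) (f : Fin k → α)
    (g : Fin n → α) :
    List.ofFn f <+: List.ofFn g ↔ ∀ i : Fin k, g (Fin.castLE hkn i) = f i := by
  rw [List.prefix_iff_eq_take, List.length_ofFn, List.ext_getElem_iff]
  simp only [List.length_ofFn, List.length_take, min_eq_left hkn, List.getElem_ofFn,
    List.getElem_take, true_and]
  exact ⟨fun h i => (h i i.isLt i.isLt).symm, fun h i hi _ => (h ⟨i, hi⟩).symm⟩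

theorem List.find?_ofFn_eq_some_iff {α : Type*} [DecidableEq α] (e : Fin n ≃ α)
    {S : Finset α} {x : α} (hx : x ∈ S) :
    (List.ofFn e).find? (fun a => decide (a ∈ S)) = some x ↔
      ∀ y ∈ S, y ≠ x → e.symm x < e.symm y := by
  simp only [List.find?_eq_some_iff_getElem, List.length_ofFn, List.getElem_ofFn,
    decide_eq_true hx, true_and, Bool.not_eq_true', decide_eq_false_iff_not]
  constructor
  · rintro ⟨i, hi, rfl, hbefore⟩ y hy hyx
    rw [e.symm_apply_apply]
    refine lt_of_not_ge fun hle => ?_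
    rcases hle.lt_or_eq with hlt | heq
    · exact hbefore _ hlt (by simpa using hy)
    · exact hyx (by rw [← heq, e.apply_symm_apply])
  · intro h
    refine ⟨e.symm x, (e.symm x).isLt, by simp, fun j hj hjS => ?_⟩
    have hne : e ⟨j, by omega⟩ ≠ x := fun hjx => by
      rw [← hjx, e.symm_apply_apply] at hj
      exact lt_irrefl j hj
    have := h _ hjS hne
    rw [e.symm_apply_apply] at this
    exact lt_asymm this hj

theorem sum_perm_prefix {M : Type*} [AddCommMonoid M] (hkn : k ≤ n) {f : Fin k → Fin n}
    (hf : Function.Injective f) (G : List (Fin n) → M) :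
    ∑ π : Equiv.Perm (Fin n),
        (if ∀ i, π (Fin.castLE hkn i) = f i then G (List.ofFn π) else 0) =
      ∑ l ∈ orderings (univ \ (List.ofFn f).toFinset), G (List.ofFn f ++ l) := by
  simp only [← List.ofFn_prefix_ofFn_iff hkn]
  rw [sum_perm_eq_sum_orderings (fun L => if List.ofFn f <+: L then G L else 0),
    sum_orderings_prefix (List.nodup_ofFn.2 hf) fun _ _ => mem_univ _]

theorem sum_perm_prefix_pow_dR_div (hk : 1 ≤ k) (hkn : k ≤ n) {f : Fin k → Fin n}
    (hf : Function.Injective f) (q c : ℝ) (E : List (Fin n) → Prop) [DecidablePred E] :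
    ∑ π : Equiv.Perm (Fin n),
        (if (∀ i, π (Fin.castLE hkn i) = f i) ∧ E (List.ofFn π) then q ^ dR π / c else 0) =
      q ^ (revMaj (List.ofFn f) + (n - k) * descents (List.ofFn f)) / c *
        ∑ l ∈ orderings (univ \ (List.ofFn f).toFinset),
          if E (List.ofFn f ++ l) then q ^ revMaj (f ⟨k - 1, Nat.sub_lt hk Nat.one_pos⟩ :: l)
          else 0 := by
  have hcard : #(univ \ (List.ofFn f).toFinset) = n - k := by
    rw [card_sdiff_of_subset (subset_univ _), card_univ, Fintype.card_fin,
      List.toFinset_card_of_nodup (List.nodup_ofFn.2 hf), List.length_ofFn]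
  simp only [ite_and, dR_eq_revMaj]
  rw [sum_perm_prefix hkn hf (fun L => if E L then q ^ revMaj L / c else 0), mul_sum]
  refine sum_congr rfl fun l hl => ?_
  rw [revMaj_append (by simp; omega), List.getLast_ofFn, length_of_mem_orderings hl, hcard]
  split_ifs
  · rw [pow_add]; ring
  · rw [mul_zero]

end Permutations

theorem stmt15 (n k : ℕ) (hk : 1 ≤ k) (hkn : k ≤ n) (q : ℝ) (hq0 : 0 < q)
    (S : Finset (Fin n))
    (f : Fin k → Fin n) (hf : Function.Injective f)
    (hdisj : ∀ i : Fin k, f i ∉ S)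
    (x : Fin n) (hx : x ∈ S) :
    (∑ π : Equiv.Perm (Fin n),
        if (∀ i : Fin k, π (Fin.castLE hkn i) = f i) ∧
            (∀ y ∈ S, y ≠ x → π.symm x < π.symm y)
        then q ^ dR π / psi n q else 0) /
      (∑ π : Equiv.Perm (Fin n),
        if ∀ i : Fin k, π (Fin.castLE hkn i) = f i then q ^ dR π / psi n q else 0)
    = (if x < f ⟨k - 1, by omega⟩ then
          q ^ (S.card - (S.filter (fun s => s < f ⟨k - 1, by omega⟩)).card +
            (S.filter (fun s => s < x)).card)
        else
          q ^ ((S.filter (fun s => s < x)).card -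
            (S.filter (fun s => s < f ⟨k - 1, by omega⟩)).card)) /
        ∑ j ∈ Finset.range S.card, q ^ j := by
  set z := f ⟨k - 1, by omega⟩
  set T := univ \ (List.ofFn f).toFinset
  have hST : S ⊆ T := fun y hy => mem_sdiff.2 ⟨mem_univ y, fun hyf => by
    obtain ⟨i, rfl⟩ := List.mem_ofFn.1 (List.mem_toFinset.1 hyf)
    exact hdisj i hy⟩
  have hzT : z ∉ T := by simp [T, z, List.mem_ofFn]
  have hfind := List.find?_append_of_forall_not (P := (· ∈ S)) (p := List.ofFn f) fun a ha => by
    obtain ⟨i, rfl⟩ := List.mem_ofFn.1 ha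
    simpa using hdisj i
  have hnum :=
    sum_perm_prefix_pow_dR_div hk hkn hf q (psi n q) (fun L => L.find? (· ∈ S) = some x)
  have hden := sum_perm_prefix_pow_dR_div hk hkn hf q (psi n q) (fun _ => True)
  simp only [and_true, if_true] at hden
  simp only [hfind] at hnum
  simp only [← List.find?_ofFn_eq_some_iff _ hx]
  rw [hnum, hden, mul_div_mul_left _ _ (div_pos (pow_pos hq0 _) (psi_pos n hq0)).ne',
    sum_orderings_pow_revMaj, div_eq_div_iff (mul_pos (pow_pos hq0 _) (psi_pos _ hq0)).ne'
      (geom_sum_pos hq0.le (card_pos.2 ⟨x, hx⟩).ne').ne',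
    sum_orderings_find?_pow_revMaj_mul q hST hx hzT]
  have hcyc : (if x < z then q ^ (#S - #{s ∈ S | s < z} + #{s ∈ S | s < x})
      else q ^ (#{s ∈ S | s < x} - #{s ∈ S | s < z})) = q ^ S.cyclicRank z x := by
    unfold cyclicRank rank
    split_ifs <;> rfl
  rw [hcyc, pow_add]
  ring
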